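/- Let j ≥ 1, 0 ≤ L ≤ j, and 0 ≤ μ < 2^j, and set ω_M = e^{-2πi/M}. Then the 2^L × 2^L matrix ( ω_{2^{j+1}}^{ (2^{j+1-L} p + 1) ((μ + r) mod 2^j) } )_{p,r=0}^{2^L - 1} factorizes as diag( ω_{2^L}^{μ p} )_{p=0}^{2^L-1} · F_{2^L} · diag( ω_{2^{j+1}}^{ (μ + r) mod 2^j } )_{r=0}^{2^L-1}, where F_{2^L} = ( ω_{2^L}^{p r} )_{p,r=0}^{2^L - 1} is the Fourier matrix of size 2^L. -/

import Mathlib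

open Complex Finset

/-- `ω_M = e^{-2πi/M}`. -/
noncomputable def dftOmega (M : ℕ) : ℂ := Complex.exp (-2 * Real.pi * Complex.I / M)

/-- Discrete Fourier transform of length `M`: `(F_M v)_k = Σ_{r<M} ω_M^{k r} v_r`. -/
noncomputable def dft (M : ℕ) (v : ℕ → ℂ) (k : ℕ) : ℂ :=
  ∑ r ∈ Finset.range M, dftOmega M ^ (k * r) * v r

/-- The `2^j`-periodization of a vector `x ∈ ℝ^{2^J}`:
`x^(j)_k = Σ_{ℓ < 2^{J-j}} x_{k + 2^j ℓ}`. -/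
noncomputable def periodization (J j : ℕ) (x : ℕ → ℝ) (k : ℕ) : ℝ :=
  ∑ ℓ ∈ Finset.range (2 ^ (J - j)), x (k + 2 ^ j * ℓ)
/-- The Fourier matrix `F_M = (ω_M^{pq})_{p,q=0}^{M-1}`. -/
noncomputable def fourierMatrix (M : ℕ) : Matrix (Fin M) (Fin M) ℂ :=
  fun p q => dftOmega M ^ ((p : ℕ) * (q : ℕ))

/-
Writing `m_r = (μ + r) mod 2^j`, the entry is `ω_{2^{j+1}}^{2^{j+1-L} p m_r} · ω_{2^{j+1}}^{m_r}`.
Since `ω_{2^{j+1}}^{2^{j+1-L}} = ω_{2^L}` and `m_r ≡ μ + r (mod 2^L)`, the first factor is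
`ω_{2^L}^{p (μ + r)} = ω_{2^L}^{μ p} ω_{2^L}^{p r}`, which is the `(p, r)` entry of the product.
-/

lemma dftOmega_pow_self (M : ℕ) : dftOmega M ^ M = 1 := by
  rcases eq_or_ne M 0 with rfl | hM
  · exact pow_zero _
  rw [dftOmega, ← Complex.exp_nat_mul,
    show (M : ℂ) * (-2 * Real.pi * Complex.I / M) = (-1 : ℤ) * (2 * Real.pi * Complex.I) by
      field_simp; push_cast; ring]
  exact Complex.exp_int_mul_two_pi_mul_I (-1)

lemma dftOmega_pow_congr {M a b : ℕ} (h : a ≡ b [MOD M]) : dftOmega M ^ a = dftOmega M ^ b := by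
  rw [pow_eq_pow_mod a (dftOmega_pow_self M), pow_eq_pow_mod b (dftOmega_pow_self M), h]

lemma dftOmega_mul_pow_left {k : ℕ} (hk : k ≠ 0) (M : ℕ) : dftOmega (k * M) ^ k = dftOmega M := by
  rcases eq_or_ne M 0 with rfl | hM
  · simp [dftOmega]
  rw [dftOmega, dftOmega, ← Complex.exp_nat_mul]
  congr 1
  push_cast
  field_simp

theorem fourierMatrix_factorization {k M : ℕ} (hk : k ≠ 0) (c : Fin M → ℕ) (s : ℕ)
    (hc : ∀ r, c r ≡ s + r [MOD M]) :
    (fun p r : Fin M => dftOmega (k * M) ^ ((k * (p : ℕ) + 1) * c r))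
      = Matrix.diagonal (fun p : Fin M => dftOmega M ^ (s * (p : ℕ))) * fourierMatrix M *
          Matrix.diagonal (fun r => dftOmega (k * M) ^ c r) := by
  funext p r
  simp only [Matrix.mul_diagonal, Matrix.diagonal_mul, fourierMatrix]
  calc dftOmega (k * M) ^ ((k * (p : ℕ) + 1) * c r)
      = (dftOmega (k * M) ^ k) ^ ((p : ℕ) * c r) * dftOmega (k * M) ^ c r := by
        rw [← pow_mul, ← pow_add]; ring_nf
    _ = dftOmega M ^ ((p : ℕ) * (s + r)) * dftOmega (k * M) ^ c r := by
        rw [dftOmega_mul_pow_left hk, dftOmega_pow_congr ((hc r).mul_left _)]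
    _ = dftOmega M ^ (s * (p : ℕ)) * dftOmega M ^ ((p : ℕ) * (r : ℕ)) *
          dftOmega (k * M) ^ c r := by
        rw [← pow_add]; ring_nf

theorem sampled_fourier_factorization_general (j : ℕ) (L : ℕ) (hL : L ≤ j)
    (μ : ℕ) :
    (fun p r : Fin (2 ^ L) =>
        dftOmega (2 ^ (j + 1)) ^ ((2 ^ (j + 1 - L) * (p : ℕ) + 1) * ((μ + (r : ℕ)) % 2 ^ j)))
      = Matrix.diagonal (fun p : Fin (2 ^ L) => dftOmega (2 ^ L) ^ (μ * (p : ℕ))) *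
          fourierMatrix (2 ^ L) *
          Matrix.diagonal (fun r : Fin (2 ^ L) =>
            dftOmega (2 ^ (j + 1)) ^ ((μ + (r : ℕ)) % 2 ^ j)) := by
  have hsize : 2 ^ (j + 1) = 2 ^ (j + 1 - L) * 2 ^ L := by
    rw [← pow_add, Nat.sub_add_cancel (by omega)]
  rw [hsize]
  exact fourierMatrix_factorization (by positivity) _ μ fun r =>
    (Nat.mod_modEq _ _).of_dvd (pow_dvd_pow 2 hL)

/-- the matrix `(ω_{2^{j+1}}^{(2^{j+1-L}p+1)((μ+r) mod 2^j)})_{p,r}` factorizes as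
`diag(ω_{2^L}^{μp}) · F_{2^L} · diag(ω_{2^{j+1}}^{(μ+r) mod 2^j})`. -/
theorem sampled_fourier_factorization (j : ℕ) (hj : 1 ≤ j) (L : ℕ) (hL : L ≤ j)
    (μ : ℕ) (hμ : μ < 2 ^ j) :
    (fun p r : Fin (2 ^ L) =>
        dftOmega (2 ^ (j + 1)) ^ ((2 ^ (j + 1 - L) * (p : ℕ) + 1) * ((μ + (r : ℕ)) % 2 ^ j)))
      = Matrix.diagonal (fun p : Fin (2 ^ L) => dftOmega (2 ^ L) ^ (μ * (p : ℕ))) *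
          fourierMatrix (2 ^ L) *
          Matrix.diagonal (fun r : Fin (2 ^ L) =>
            dftOmega (2 ^ (j + 1)) ^ ((μ + (r : ℕ)) % 2 ^ j)) :=
  sampled_fourier_factorization_general j L hL μ
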